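/- arXiv:2006.01955 — 8 statements merged into one kernel-verified Lean document; each statement's English description precedes it below -/
import Mathlib

section
/- Let α > 1 and set β = (α+1)/2. Then the following are equivalent: (i) for all real numbers r > s > 0 one has ∫_{-π}^{π} (r² + s² − 2 r s cos θ)^{−β} · (2 − (r/s + s/r) cos θ) dθ ≥ 0; (ii) α ≤ 3. (This integral is, up to the positive factor s^{2β}, the quantity F[ln|x|, |x|^{1−α}/(1−α)](r,s) measuring the change of the logarithmic moment under the mutual attraction of two concentric circles of radii r and s interacting through the power-law potential with force W'(ρ) = ρ^{−α}.) -/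
/-!
Differentiating `sin θ · d_θ^{2(1-β)}` and integrating over a full period turns the integral into
`2 (2 - β) ∫ sin² θ · d_θ^{-2β} dθ`. The last integral is positive, so the sign of the original
integral is that of `2 - β`, i.e. of `3 - α`, whatever the radii.
-/

open Real

variable {r s : ℝ}

lemma sq_add_sq_sub_mul_cos_pos (hrs : 0 < r * s) (hne : r ≠ s) (θ : ℝ) :
    0 < r ^ 2 + s ^ 2 - 2 * r * s * cos θ := by
  have hsq : 0 < (r - s) ^ 2 := by positivity [sub_ne_zero.2 hne]
  nlinarith [cos_le_one θ]

lemma continuous_sq_add_sq_sub_mul_cos_rpow (hrs : 0 < r * s) (hne : r ≠ s) (γ : ℝ) :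
    Continuous fun θ => (r ^ 2 + s ^ 2 - 2 * r * s * cos θ) ^ γ :=
  (by fun_prop : Continuous fun θ => r ^ 2 + s ^ 2 - 2 * r * s * cos θ).rpow_const
    fun θ => Or.inl (sq_add_sq_sub_mul_cos_pos hrs hne θ).ne'

lemma hasDerivAt_sin_mul_sq_add_sq_sub_mul_cos_rpow (hrs : 0 < r * s) (hne : r ≠ s) (β θ : ℝ) :
    HasDerivAt (fun t => sin t * (r ^ 2 + s ^ 2 - 2 * r * s * cos t) ^ (1 - β))
      (cos θ * (r ^ 2 + s ^ 2 - 2 * r * s * cos θ) ^ (1 - β) +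
        2 * r * s * (1 - β) * (sin θ ^ 2 * (r ^ 2 + s ^ 2 - 2 * r * s * cos θ) ^ (-β))) θ := by
  have hu : HasDerivAt (fun t => r ^ 2 + s ^ 2 - 2 * r * s * cos t) (2 * r * s * sin θ) θ := by
    simpa using ((hasDerivAt_cos θ).const_mul (2 * r * s)).const_sub (r ^ 2 + s ^ 2)
  refine ((hasDerivAt_sin θ).mul (hu.rpow_const (p := 1 - β)
    (Or.inl (sq_add_sq_sub_mul_cos_pos hrs hne θ).ne'))).congr_deriv ?_
  rw [show 1 - β - 1 = -β by ring]
  ring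

/-- Integration by parts over a full period, where the boundary term `sin θ · …` vanishes. -/
lemma integral_cos_mul_sq_add_sq_sub_mul_cos_rpow (hrs : 0 < r * s) (hne : r ≠ s) (β : ℝ) :
    ∫ θ in -π..π, cos θ * (r ^ 2 + s ^ 2 - 2 * r * s * cos θ) ^ (1 - β) =
      -(2 * r * s * (1 - β)) *
        ∫ θ in -π..π, sin θ ^ 2 * (r ^ 2 + s ^ 2 - 2 * r * s * cos θ) ^ (-β) := by
  have hcont := continuous_sq_add_sq_sub_mul_cos_rpow hrs hne
  have hFTC := intervalIntegral.integral_eq_sub_of_hasDerivAt (a := -π) (b := π)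
    (fun θ _ => hasDerivAt_sin_mul_sq_add_sq_sub_mul_cos_rpow hrs hne β θ)
    (by apply Continuous.intervalIntegrable; fun_prop)
  rw [intervalIntegral.integral_add (by apply Continuous.intervalIntegrable; fun_prop)
    (by apply Continuous.intervalIntegrable; fun_prop), intervalIntegral.integral_const_mul] at hFTC
  simp only [sin_pi, sin_neg, zero_mul] at hFTC
  linarith

lemma integral_sq_add_sq_sub_mul_cos_rpow_mul_eq (hrs : 0 < r * s) (hne : r ≠ s) (β : ℝ) :
    ∫ θ in -π..π, (r ^ 2 + s ^ 2 - 2 * r * s * cos θ) ^ (-β) * (2 - (r / s + s / r) * cos θ) =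
      2 * (2 - β) * ∫ θ in -π..π, sin θ ^ 2 * (r ^ 2 + s ^ 2 - 2 * r * s * cos θ) ^ (-β) := by
  have hcont := continuous_sq_add_sq_sub_mul_cos_rpow hrs hne
  obtain ⟨hr, hs⟩ := mul_ne_zero_iff.1 hrs.ne'
  -- `r / s + s / r = (d_θ² + 2 r s cos θ) / (r s)` and `1 - cos² θ = sin² θ`
  have hpt : ∀ θ, (r ^ 2 + s ^ 2 - 2 * r * s * cos θ) ^ (-β) * (2 - (r / s + s / r) * cos θ) =
      2 * (sin θ ^ 2 * (r ^ 2 + s ^ 2 - 2 * r * s * cos θ) ^ (-β)) -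
        (r * s)⁻¹ * (cos θ * (r ^ 2 + s ^ 2 - 2 * r * s * cos θ) ^ (1 - β)) := by
    intro θ
    have hu := sq_add_sq_sub_mul_cos_pos hrs hne θ
    rw [sub_eq_add_neg 1 β, rpow_add hu, rpow_one, sin_sq]
    field_simp
    ring
  simp_rw [hpt]
  rw [intervalIntegral.integral_sub (by apply Continuous.intervalIntegrable; fun_prop)
    (by apply Continuous.intervalIntegrable; fun_prop), intervalIntegral.integral_const_mul,
    intervalIntegral.integral_const_mul, integral_cos_mul_sq_add_sq_sub_mul_cos_rpow hrs hne,
    ← mul_assoc, show (r * s)⁻¹ * -(2 * r * s * (1 - β)) = -(2 * (1 - β)) by field_simp]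
  ring

lemma integral_sin_sq_mul_pos {f : ℝ → ℝ} (hf : Continuous f) (hpos : ∀ θ, 0 < f θ) :
    0 < ∫ θ in -π..π, sin θ ^ 2 * f θ :=
  intervalIntegral.integral_pos (by linarith [pi_pos]) (by fun_prop)
    (fun θ _ => mul_nonneg (sq_nonneg _) (hpos θ).le)
    ⟨π / 2, ⟨by linarith [pi_pos], by linarith [pi_pos]⟩, by simpa using hpos (π / 2)⟩

theorem stmt_0_general (α : ℝ) (β : ℝ) (hβ : β = (α + 1) / 2) :
    (∀ r s : ℝ, 0 < s → s < r →
        0 ≤ ∫ θ in (-Real.pi)..Real.pi,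
          (r ^ 2 + s ^ 2 - 2 * r * s * Real.cos θ) ^ (-β) *
            (2 - (r / s + s / r) * Real.cos θ)) ↔ α ≤ 3 := by
  have hsign : ∀ r s : ℝ, 0 < s → s < r →
      (0 ≤ ∫ θ in (-π)..π, (r ^ 2 + s ^ 2 - 2 * r * s * cos θ) ^ (-β) *
        (2 - (r / s + s / r) * cos θ) ↔ α ≤ 3) := by
    intro r s hs hsr
    have hrs : 0 < r * s := mul_pos (hs.trans hsr) hs
    rw [integral_sq_add_sq_sub_mul_cos_rpow_mul_eq hrs hsr.ne', mul_nonneg_iff_of_pos_right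
      (integral_sin_sq_mul_pos (continuous_sq_add_sq_sub_mul_cos_rpow hrs hsr.ne' _)
        fun θ => rpow_pos_of_pos (sq_add_sq_sub_mul_cos_pos hrs hsr.ne' θ) _)]
    constructor <;> intro h <;> linarith
  exact ⟨fun h => (hsign 2 1 one_pos one_lt_two).1 (h 2 1 one_pos one_lt_two),
    fun h r s hs hsr => (hsign r s hs hsr).2 h⟩

/-- Positivity of the logarithmic-moment interaction of two circles under a power-law
attraction force `W'(ρ) = ρ^{-α}` holds for all radii `r > s > 0` if and only if `α ≤ 3`. -/
theorem stmt_0 (α : ℝ) (hα : 1 < α) (β : ℝ) (hβ : β = (α + 1) / 2) :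
    (∀ r s : ℝ, 0 < s → s < r →
        0 ≤ ∫ θ in (-Real.pi)..Real.pi,
          (r ^ 2 + s ^ 2 - 2 * r * s * Real.cos θ) ^ (-β) *
            (2 - (r / s + s / r) * Real.cos θ)) ↔ α ≤ 3 :=
  stmt_0_general α β hβ
end

section
/- Let β > 1 and z > 1. Then ∫_{-π}^{π} (z − cos θ)^{−β} (1 − z cos θ) dθ = (2 − β) ∫_{-π}^{π} (z − cos θ)^{−β} sin² θ dθ. In particular, for 1 < β ≤ 2 the left-hand side is nonnegative for every z > 1, and for β > 2 it is negative for every z > 1. -/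
/-!
Integration by parts: `(z - cos θ) ^ (1 - β) * sin θ` is an antiderivative of the difference
of the two sides' integrands (by `sin² + cos² = 1`) and vanishes at `± π`. The signs then follow
because `∫ (z - cos θ) ^ (-β) * sin² θ` is positive.
-/

open Real intervalIntegral
open MeasureTheory (volume)

section SubCos

variable {z : ℝ}

lemma hasDerivAt_rpow_sub_cos_mul_sin (β : ℝ) {θ : ℝ} (hθ : z - cos θ ≠ 0) :
    HasDerivAt (fun x => (z - cos x) ^ (1 - β) * sin x)
      ((2 - β) * ((z - cos θ) ^ (-β) * sin θ ^ 2) - (z - cos θ) ^ (-β) * (1 - z * cos θ))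
      θ := by
  have hbase : HasDerivAt (fun x => z - cos x) (sin θ) θ := by
    simpa using (hasDerivAt_cos θ).const_sub z
  have hpow := (hbase.rpow_const (p := 1 - β) (Or.inl hθ)).mul (hasDerivAt_sin θ)
  refine hpow.congr_deriv ?_
  rw [show (1 - β - 1 : ℝ) = -β by ring, show (1 - β : ℝ) = -β + 1 by ring,
    rpow_add_one hθ]
  linear_combination -(z - cos θ) ^ (-β) * sin_sq_add_cos_sq θ

variable (hz : 1 < z)
include hz

lemma sub_cos_pos (θ : ℝ) : 0 < z - cos θ := by
  linarith [cos_le_one θ]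

lemma continuous_rpow_sub_cos (β : ℝ) : Continuous fun θ => (z - cos θ) ^ β :=
  (continuous_const.sub continuous_cos).rpow_const fun θ => Or.inl (sub_cos_pos hz θ).ne'

lemma integral_rpow_sub_cos_mul_one_sub_mul_cos (β : ℝ) :
    ∫ θ in -π..π, (z - cos θ) ^ (-β) * (1 - z * cos θ)
      = (2 - β) * ∫ θ in -π..π, (z - cos θ) ^ (-β) * sin θ ^ 2 := by
  have hcont := continuous_rpow_sub_cos hz (-β)
  have hsin : IntervalIntegrable (fun θ => (z - cos θ) ^ (-β) * sin θ ^ 2) volume (-π) π :=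
    (hcont.mul (by fun_prop)).intervalIntegrable _ _
  have hcos :
      IntervalIntegrable (fun θ => (z - cos θ) ^ (-β) * (1 - z * cos θ)) volume (-π) π :=
    (hcont.mul (by fun_prop)).intervalIntegrable _ _
  have hantideriv := integral_eq_sub_of_hasDerivAt
    (fun θ _ => hasDerivAt_rpow_sub_cos_mul_sin β (sub_cos_pos hz θ).ne')
    ((hsin.const_mul (2 - β)).sub hcos)
  rw [integral_sub (hsin.const_mul (2 - β)) hcos, integral_const_mul] at hantideriv
  simp only [sin_pi, sin_neg, neg_zero, mul_zero, sub_zero] at hantideriv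
  exact (sub_eq_zero.mp hantideriv).symm

lemma integral_rpow_sub_cos_mul_sin_sq_pos (β : ℝ) :
    0 < ∫ θ in -π..π, (z - cos θ) ^ (-β) * sin θ ^ 2 := by
  have hpos θ : 0 < (z - cos θ) ^ (-β) := rpow_pos_of_pos (sub_cos_pos hz θ) _
  refine integral_pos (by linarith [pi_pos])
    ((continuous_rpow_sub_cos hz _).mul (by fun_prop)).continuousOn
    (fun θ _ => mul_nonneg (hpos θ).le (sq_nonneg _))
    ⟨π / 2, ⟨by linarith [pi_pos], by linarith [pi_pos]⟩, ?_⟩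
  simpa using hpos (π / 2)

end SubCos

theorem stmt_1_general (β z : ℝ) (hz : 1 < z) :
    ((∫ θ in (-Real.pi)..Real.pi, (z - Real.cos θ) ^ (-β) * (1 - z * Real.cos θ))
        = (2 - β) * ∫ θ in (-Real.pi)..Real.pi, (z - Real.cos θ) ^ (-β) * Real.sin θ ^ 2)
    ∧ (β ≤ 2 →
        0 ≤ ∫ θ in (-Real.pi)..Real.pi, (z - Real.cos θ) ^ (-β) * (1 - z * Real.cos θ))
    ∧ (2 < β →
        (∫ θ in (-Real.pi)..Real.pi, (z - Real.cos θ) ^ (-β) * (1 - z * Real.cos θ)) < 0) := by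
  have hI := integral_rpow_sub_cos_mul_sin_sq_pos hz β
  rw [integral_rpow_sub_cos_mul_one_sub_mul_cos hz β]
  exact ⟨rfl, fun hβ => mul_nonneg (by linarith) hI.le,
    fun hβ => mul_neg_of_neg_of_pos (by linarith) hI⟩

/-- Integration-by-parts identity `∫ (z-cosθ)^{-β}(1-z cosθ) dθ = (2-β) ∫ (z-cosθ)^{-β} sin²θ dθ`
for `β > 1`, `z > 1`, and the resulting sign of the left-hand side. -/
theorem stmt_1 (β z : ℝ) (hβ : 1 < β) (hz : 1 < z) :
    ((∫ θ in (-Real.pi)..Real.pi, (z - Real.cos θ) ^ (-β) * (1 - z * Real.cos θ))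
        = (2 - β) * ∫ θ in (-Real.pi)..Real.pi, (z - Real.cos θ) ^ (-β) * Real.sin θ ^ 2)
    ∧ (β ≤ 2 →
        0 ≤ ∫ θ in (-Real.pi)..Real.pi, (z - Real.cos θ) ^ (-β) * (1 - z * Real.cos θ))
    ∧ (2 < β →
        (∫ θ in (-Real.pi)..Real.pi, (z - Real.cos θ) ^ (-β) * (1 - z * Real.cos θ)) < 0) :=
  stmt_1_general β z hz
end

section
/- Fix 1 < β < 2. Then there exists a constant C > 0, depending only on β, such that for every z > 1: ((z − 1)/z) ∫_{-π}^{π} (z − cos θ)^{−β} dθ ≤ C ∫_{-π}^{π} (z − cos θ)^{−β} (1 − z cos θ) dθ. -/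
/-!
Integrating `d/dθ [(z - cos θ) ^ (1 - β) * sin θ]` over `[-π, π]` turns the right-hand integral
into `(2 - β) ∫ (z - cos θ) ^ (-β) * sin θ ^ 2`. Put `δ = min √(z - 1) (1/2)`. On `[δ, 2δ]` the
kernel `(z - cos θ) ^ (-β)` is at least `(3 (z - 1)) ^ (-β)` and `sin θ ≥ δ / 2`, so this integral
is `≳ δ³ (z - 1) ^ (-β)`. Conversely `(z - cos θ) ^ (-β) ≤ min ((z - 1) ^ (-β)) (5 ^ β θ ^ (-2β))`,
and for `β > 1/2` integrating this gives `∫ (z - cos θ) ^ (-β) ≲ δ (z - 1) ^ (-β)`.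
As `(z - 1) / z ≤ 4 δ²`, the two bounds match.
-/

open Real MeasureTheory intervalIntegral Set

lemma intervalIntegral.integral_neg_self_eq_two_mul_of_even {f : ℝ → ℝ} (hf : Continuous f)
    (heven : ∀ x, f (-x) = f x) (a : ℝ) :
    ∫ x in -a..a, f x = 2 * ∫ x in 0..a, f x := by
  have hneg : ∫ x in -a..0, f x = ∫ x in 0..a, f x := by
    simpa [heven] using (integral_comp_neg (a := 0) (b := a) f).symm
  rw [← integral_add_adjacent_intervals (b := 0) (hf.intervalIntegrable _ _)
    (hf.intervalIntegrable _ _), hneg, two_mul]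

lemma intervalIntegral.integral_rpow_le_of_lt_neg_one {r a b : ℝ} (hr : r < -1) (ha : 0 < a)
    (hab : a ≤ b) : ∫ x in a..b, x ^ r ≤ a ^ (r + 1) / -(r + 1) := by
  have h0 : (0 : ℝ) ∉ uIcc a b := by
    rw [uIcc_of_le hab]; exact fun h => (h.1.trans_lt' ha).false
  have hb : 0 ≤ b ^ (r + 1) := rpow_nonneg (ha.le.trans hab) _
  rw [integral_rpow (Or.inr ⟨hr.ne, h0⟩), div_neg, ← neg_div]
  exact div_le_div_of_nonpos_of_le (by linarith) (by linarith)

namespace CosKernel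

variable {β z : ℝ}

lemma sub_cos_pos (hz : 1 < z) (θ : ℝ) : 0 < z - cos θ := by
  linarith [cos_le_one θ]

lemma continuous_sub_cos_rpow (hz : 1 < z) (p : ℝ) : Continuous fun θ => (z - cos θ) ^ p :=
  (continuous_const.sub continuous_cos).rpow_const fun θ => Or.inl (sub_cos_pos hz θ).ne'

lemma intervalIntegrable_sub_cos_rpow (hz : 1 < z) (p a b : ℝ) :
    IntervalIntegrable (fun θ => (z - cos θ) ^ p) volume a b :=
  (continuous_sub_cos_rpow hz p).intervalIntegrable a b

lemma sub_cos_rpow_neg_le (hβ : 0 ≤ β) (hz : 1 < z) (θ : ℝ) :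
    (z - cos θ) ^ (-β) ≤ (z - 1) ^ (-β) :=
  rpow_le_rpow_of_nonpos (by linarith) (by linarith [cos_le_one θ]) (by linarith)

lemma sub_cos_rpow_neg_le_rpow (hβ : 0 ≤ β) (hz : 1 < z) {θ : ℝ} (hθ : 0 < θ) (hθπ : θ ≤ π) :
    (z - cos θ) ^ (-β) ≤ 5 ^ β * θ ^ (-(2 * β)) := by
  have hcos : cos θ ≤ 1 - 2 / π ^ 2 * θ ^ 2 :=
    cos_le_one_sub_mul_cos_sq (by rwa [abs_of_pos hθ])
  have hπ : 2 / π ^ 2 ≥ 1 / 5 := by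
    rw [ge_iff_le, div_le_div_iff₀ (by norm_num) (by positivity)]
    nlinarith [pi_lt_d2, pi_pos]
  have hbase : θ ^ 2 / 5 ≤ z - cos θ := by nlinarith [sq_nonneg θ]
  calc (z - cos θ) ^ (-β) ≤ (θ ^ 2 / 5) ^ (-β) :=
        rpow_le_rpow_of_nonpos (by positivity) hbase (by linarith)
    _ = 5 ^ β * θ ^ (-(2 * β)) := by
        rw [div_rpow (by positivity) (by norm_num), rpow_neg (show (0 : ℝ) ≤ 5 by norm_num),
          div_inv_eq_mul, mul_comm, ← rpow_natCast, ← rpow_mul hθ.le]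
        norm_num

lemma integral_sub_cos_rpow_neg_le_of_le (hβ : 0 ≤ β) (hz : 1 < z) {a b : ℝ} (hab : a ≤ b) :
    ∫ θ in a..b, (z - cos θ) ^ (-β) ≤ (b - a) * (z - 1) ^ (-β) := by
  simpa using integral_mono_on hab (intervalIntegrable_sub_cos_rpow hz _ _ _)
    intervalIntegrable_const fun θ _ => sub_cos_rpow_neg_le hβ hz θ

lemma integral_sub_cos_rpow_neg_tail_le (hβ : 1 / 2 < β) (hz : 1 < z) {δ : ℝ} (hδ : 0 < δ)
    (hδπ : δ ≤ π) :
    ∫ θ in δ..π, (z - cos θ) ^ (-β) ≤ 5 ^ β * δ ^ (1 - 2 * β) / (2 * β - 1) := by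
  have hpow : ContinuousOn (fun θ : ℝ => θ ^ (-(2 * β))) (uIcc δ π) := fun θ hθ =>
    (continuousAt_rpow_const θ _
      (Or.inl (hδ.trans_le (uIcc_of_le hδπ ▸ hθ).1).ne')).continuousWithinAt
  calc ∫ θ in δ..π, (z - cos θ) ^ (-β)
      ≤ ∫ θ in δ..π, 5 ^ β * θ ^ (-(2 * β)) :=
        integral_mono_on hδπ (intervalIntegrable_sub_cos_rpow hz _ _ _)
          (hpow.intervalIntegrable.const_mul _) fun θ hθ =>
            sub_cos_rpow_neg_le_rpow (by linarith) hz (hδ.trans_le hθ.1) hθ.2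
    _ = 5 ^ β * ∫ θ in δ..π, θ ^ (-(2 * β)) := integral_const_mul _ _
    _ ≤ 5 ^ β * (δ ^ (-(2 * β) + 1) / -(-(2 * β) + 1)) := by
        gcongr; exact integral_rpow_le_of_lt_neg_one (by linarith) hδ hδπ
    _ = 5 ^ β * δ ^ (1 - 2 * β) / (2 * β - 1) := by ring_nf

lemma integral_sub_cos_rpow_neg_le (hβ : 0 ≤ β) (hz : 1 < z) :
    ∫ θ in -π..π, (z - cos θ) ^ (-β) ≤ 2 * π * (z - 1) ^ (-β) := by
  have := integral_sub_cos_rpow_neg_le_of_le hβ hz (neg_le_self pi_pos.le)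
  rwa [sub_neg_eq_add, ← two_mul] at this

lemma integral_sub_cos_rpow_neg_le_sqrt (hβ : 1 / 2 < β) (hz : 1 < z) (hzπ : √(z - 1) ≤ π) :
    ∫ θ in -π..π, (z - cos θ) ^ (-β)
      ≤ 2 * (1 + 5 ^ β / (2 * β - 1)) * √(z - 1) * (z - 1) ^ (-β) := by
  set δ := √(z - 1)
  have hδ : 0 < δ := sqrt_pos.2 (by linarith)
  have hδpow : δ ^ (1 - 2 * β) = δ * (z - 1) ^ (-β) := by
    rw [rpow_sub hδ, rpow_one, div_eq_mul_inv, ← rpow_neg hδ.le, neg_mul_eq_mul_neg,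
      rpow_mul hδ.le, rpow_two, sq_sqrt (by linarith)]
  have hsplit := integral_add_adjacent_intervals (a := 0) (b := δ) (c := π)
    (intervalIntegrable_sub_cos_rpow hz (-β) _ _) (intervalIntegrable_sub_cos_rpow hz (-β) _ _)
  have hhead := integral_sub_cos_rpow_neg_le_of_le (β := β) (by linarith) hz hδ.le
  have htail := integral_sub_cos_rpow_neg_tail_le hβ hz hδ hzπ
  rw [hδpow] at htail
  rw [integral_neg_self_eq_two_mul_of_even (continuous_sub_cos_rpow hz _) (by simp), ← hsplit]
  have h2β : 0 < 2 * β - 1 := by linarith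
  calc 2 * ((∫ θ in 0..δ, (z - cos θ) ^ (-β)) + ∫ θ in δ..π, (z - cos θ) ^ (-β))
      ≤ 2 * ((δ - 0) * (z - 1) ^ (-β) + 5 ^ β * (δ * (z - 1) ^ (-β)) / (2 * β - 1)) := by
        gcongr
    _ = _ := by field_simp; ring

lemma rpow_neg_div_le_sub_cos_rpow_neg (hβ : 0 ≤ β) (hz : 1 < z) {θ : ℝ}
    (hθ : θ ^ 2 ≤ 4 * (z - 1)) :
    (z - 1) ^ (-β) / 3 ^ β ≤ (z - cos θ) ^ (-β) := by
  have hcos : 1 - θ ^ 2 / 2 ≤ cos θ := one_sub_sq_div_two_le_cos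
  calc (z - 1) ^ (-β) / 3 ^ β = (3 * (z - 1)) ^ (-β) := by
        rw [mul_rpow (by norm_num) (by linarith), rpow_neg (show (0 : ℝ) ≤ 3 by norm_num),
          div_eq_inv_mul]
    _ ≤ (z - cos θ) ^ (-β) :=
        rpow_le_rpow_of_nonpos (sub_cos_pos hz θ) (by linarith) (by linarith)

lemma le_integral_sub_cos_rpow_neg_mul_sin_sq (hβ : 0 ≤ β) (hz : 1 < z) {δ : ℝ} (hδ : 0 < δ)
    (hδ1 : δ ≤ 1 / 2) (hδz : δ ^ 2 ≤ z - 1) :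
    δ ^ 3 * (z - 1) ^ (-β) / (4 * 3 ^ β)
      ≤ ∫ θ in -π..π, (z - cos θ) ^ (-β) * sin θ ^ 2 := by
  have hπ : 3 < π := pi_gt_three
  have hπ4 : π ≤ 4 := pi_le_four
  have hint : ∀ a b, IntervalIntegrable (fun θ => (z - cos θ) ^ (-β) * sin θ ^ 2) volume a b :=
    fun a b => ((continuous_sub_cos_rpow hz _).mul (continuous_sin.pow 2)).intervalIntegrable a b
  have hpoint : ∀ θ ∈ Icc δ (2 * δ),
      (z - 1) ^ (-β) / 3 ^ β * (δ / 2) ^ 2 ≤ (z - cos θ) ^ (-β) * sin θ ^ 2 := by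
    rintro θ ⟨hδθ, hθδ⟩
    have hsin : δ / 2 ≤ sin θ := by
      refine le_trans ?_ (mul_le_sin (by linarith) (by linarith))
      rw [div_mul_eq_mul_div, le_div_iff₀ (by linarith)]
      nlinarith
    gcongr
    · exact rpow_nonneg (sub_cos_pos hz θ).le _
    · exact rpow_neg_div_le_sub_cos_rpow_neg hβ hz (by nlinarith)
  calc δ ^ 3 * (z - 1) ^ (-β) / (4 * 3 ^ β)
      = ∫ _ in δ..2 * δ, (z - 1) ^ (-β) / 3 ^ β * (δ / 2) ^ 2 := by
        rw [intervalIntegral.integral_const, smul_eq_mul]; ring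
    _ ≤ ∫ θ in δ..2 * δ, (z - cos θ) ^ (-β) * sin θ ^ 2 :=
        integral_mono_on (by linarith) intervalIntegrable_const (hint _ _) hpoint
    _ ≤ ∫ θ in -π..π, (z - cos θ) ^ (-β) * sin θ ^ 2 :=
        integral_mono_interval (by linarith) (by linarith) (by linarith)
          (Filter.Eventually.of_forall fun θ =>
            mul_nonneg (rpow_nonneg (sub_cos_pos hz θ).le _) (sq_nonneg _)) (hint _ _)

lemma integral_sub_cos_rpow_neg_mul_one_sub_mul_cos (hz : 1 < z) :
    ∫ θ in -π..π, (z - cos θ) ^ (-β) * (1 - z * cos θ)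
      = (2 - β) * ∫ θ in -π..π, (z - cos θ) ^ (-β) * sin θ ^ 2 := by
  have hderiv : ∀ θ, HasDerivAt (fun θ => (z - cos θ) ^ (1 - β) * sin θ)
      ((2 - β) * ((z - cos θ) ^ (-β) * sin θ ^ 2) - (z - cos θ) ^ (-β) * (1 - z * cos θ)) θ := by
    intro θ
    have hu : HasDerivAt (fun θ => z - cos θ) (sin θ) θ := by
      simpa using (hasDerivAt_cos θ).const_sub z
    refine ((hu.rpow_const (p := 1 - β) (Or.inl (sub_cos_pos hz θ).ne')).mul
      (hasDerivAt_sin θ)).congr_deriv ?_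
    rw [show 1 - β - 1 = -β by ring, show 1 - β = -β + 1 by ring,
      rpow_add_one (sub_cos_pos hz θ).ne']
    linear_combination (-(z - cos θ) ^ (-β)) * sin_sq_add_cos_sq θ
  have hS : IntervalIntegrable (fun θ => (z - cos θ) ^ (-β) * sin θ ^ 2) volume (-π) π :=
    ((continuous_sub_cos_rpow hz _).mul (continuous_sin.pow 2)).intervalIntegrable _ _
  have hT : IntervalIntegrable (fun θ => (z - cos θ) ^ (-β) * (1 - z * cos θ)) volume (-π) π :=
    ((continuous_sub_cos_rpow hz _).mul (by fun_prop)).intervalIntegrable _ _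
  have hFTC := integral_eq_sub_of_hasDerivAt (fun θ _ => hderiv θ) ((hS.const_mul _).sub hT)
  rw [integral_sub (hS.const_mul _) hT, intervalIntegral.integral_const_mul] at hFTC
  simp only [sin_pi, sin_neg, mul_zero, neg_zero, sub_zero] at hFTC
  linarith

lemma integral_sub_cos_rpow_neg_le_min (hβ : 1 / 2 < β) (hz : 1 < z) :
    ∫ θ in -π..π, (z - cos θ) ^ (-β)
      ≤ max (2 * (1 + 5 ^ β / (2 * β - 1))) (4 * π) * min √(z - 1) (1 / 2) * (z - 1) ^ (-β) := by
  rcases le_total √(z - 1) (1 / 2) with hsmall | hlarge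
  · rw [min_eq_left hsmall]
    calc _ ≤ 2 * (1 + 5 ^ β / (2 * β - 1)) * √(z - 1) * (z - 1) ^ (-β) :=
          integral_sub_cos_rpow_neg_le_sqrt hβ hz (by linarith [pi_gt_three])
      _ ≤ _ := by gcongr; exact le_max_left _ _
  · rw [min_eq_right hlarge]
    calc _ ≤ 2 * π * (z - 1) ^ (-β) := integral_sub_cos_rpow_neg_le (by linarith) hz
      _ = 4 * π * (1 / 2) * (z - 1) ^ (-β) := by ring
      _ ≤ _ := by gcongr; exact le_max_right _ _

lemma sub_one_div_le_four_mul_min_sq (hz : 1 < z) :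
    (z - 1) / z ≤ 4 * min √(z - 1) (1 / 2) ^ 2 := by
  rw [div_le_iff₀ (by linarith)]
  rcases le_total √(z - 1) (1 / 2) with hsmall | hlarge
  · rw [min_eq_left hsmall, sq_sqrt (by linarith)]; nlinarith
  · rw [min_eq_right hlarge]; linarith

theorem mul_integral_sub_cos_rpow_neg_le (hβ : 1 / 2 < β) (hz : 1 < z) :
    (z - 1) / z * ∫ θ in -π..π, (z - cos θ) ^ (-β)
      ≤ 16 * 3 ^ β * max (2 * (1 + 5 ^ β / (2 * β - 1))) (4 * π)
        * ∫ θ in -π..π, (z - cos θ) ^ (-β) * sin θ ^ 2 := by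
  set M := max (2 * (1 + 5 ^ β / (2 * β - 1))) (4 * π)
  set δ := min √(z - 1) (1 / 2)
  have hδ : 0 < δ := lt_min (sqrt_pos.2 (by linarith)) (by norm_num)
  have hδz : δ ^ 2 ≤ z - 1 := by
    calc δ ^ 2 ≤ √(z - 1) ^ 2 := by gcongr; exact min_le_left _ _
      _ = z - 1 := sq_sqrt (by linarith)
  have hJ : 0 ≤ ∫ θ in -π..π, (z - cos θ) ^ (-β) :=
    integral_nonneg (by linarith [pi_pos]) fun θ _ => rpow_nonneg (sub_cos_pos hz θ).le _
  calc (z - 1) / z * ∫ θ in -π..π, (z - cos θ) ^ (-β)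
      ≤ 4 * δ ^ 2 * (M * δ * (z - 1) ^ (-β)) := by
        gcongr
        · exact sub_one_div_le_four_mul_min_sq hz
        · exact integral_sub_cos_rpow_neg_le_min hβ hz
    _ = 16 * 3 ^ β * M * (δ ^ 3 * (z - 1) ^ (-β) / (4 * 3 ^ β)) := by field_simp; ring
    _ ≤ _ := by
        gcongr
        exact le_integral_sub_cos_rpow_neg_mul_sin_sq (by linarith) hz hδ (min_le_right _ _) hδz

end CosKernel

/-- For fixed `1 < β < 2` there is a constant `C = C(β) > 0` such that for every `z > 1`,
`((z-1)/z) ∫ (z-cosθ)^{-β} dθ ≤ C ∫ (z-cosθ)^{-β} (1 - z cosθ) dθ`. -/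
theorem stmt_4 (β : ℝ) (hβ1 : 1 < β) (hβ2 : β < 2) :
    ∃ C : ℝ, 0 < C ∧ ∀ z : ℝ, 1 < z →
      (z - 1) / z * ∫ θ in (-Real.pi)..Real.pi, (z - Real.cos θ) ^ (-β)
        ≤ C * ∫ θ in (-Real.pi)..Real.pi, (z - Real.cos θ) ^ (-β) * (1 - z * Real.cos θ) := by
  have h2β : 0 < 2 - β := by linarith
  refine ⟨16 * 3 ^ β * max (2 * (1 + 5 ^ β / (2 * β - 1))) (4 * π) / (2 - β),
    div_pos (by positivity) h2β, fun z hz => ?_⟩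
  rw [CosKernel.integral_sub_cos_rpow_neg_mul_one_sub_mul_cos hz, ← mul_assoc,
    div_mul_cancel₀ _ h2β.ne']
  exact CosKernel.mul_integral_sub_cos_rpow_neg_le (by linarith) hz
end

section
/- For real numbers r, s > 0 with r ≠ s, consider I(r, s) := ∫_{-π}^{π} (r − s cos θ)/(r² + s² − 2 r s cos θ) dθ. Then: (a) if 0 < r < s, then I(r, s) = 0; (b) if r > s > 0, then I(r, s) > 0. -/
/-!
For `r < s` the integrand is the derivative of `-(1/r) arctan (r sin θ / (s - r cos θ))`, which
is smooth because `s - r cos θ ≥ s - r > 0`, and this vanishes at `θ = ±π`; hence `I(r, s) = 0`.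
The integrands of `r I(r, s)` and `s I(s, r)` add up to `1`, so `r I(r, s) + s I(s, r) = 2π`,
and for `s < r` the first case gives `I(r, s) = 2π / r > 0`.
-/

open Real

lemma sq_add_sq_sub_two_mul_mul_cos_eq (a b θ : ℝ) :
    a ^ 2 + b ^ 2 - 2 * a * b * cos θ = (b - a * cos θ) ^ 2 + (a * sin θ) ^ 2 := by
  linear_combination (-a ^ 2) * sin_sq_add_cos_sq θ

lemma hasDerivAt_arctan_sin_div {a b θ : ℝ} (h : b - a * cos θ ≠ 0) :
    HasDerivAt (fun x => arctan (a * sin x / (b - a * cos x)))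
      (a * (b * cos θ - a) / (a ^ 2 + b ^ 2 - 2 * a * b * cos θ)) θ := by
  have hnum : HasDerivAt (fun x => a * sin x) (a * cos θ) θ := (hasDerivAt_sin θ).const_mul a
  have hden : HasDerivAt (fun x => b - a * cos x) (a * sin θ) θ := by
    simpa using ((hasDerivAt_cos θ).const_mul a).const_sub b
  refine ((hasDerivAt_arctan _).comp θ (hnum.div hden h)).congr_deriv ?_
  have hD : (b - a * cos θ) ^ 2 + (a * sin θ) ^ 2 ≠ 0 := by positivity
  rw [sq_add_sq_sub_two_mul_mul_cos_eq]
  simp only [Pi.div_apply]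
  field_simp
  linear_combination (-a ^ 2) * sin_sq_add_cos_sq θ

/-- `I(r, s)` of the statement. -/
noncomputable def logPotentialRadialDeriv (r s : ℝ) : ℝ :=
  ∫ θ in (-π)..π, (r - s * cos θ) / (r ^ 2 + s ^ 2 - 2 * r * s * cos θ)

lemma sq_add_sq_sub_two_mul_mul_cos_pos {a b : ℝ} (hab : 0 ≤ a * b) (hne : a ≠ b) (θ : ℝ) :
    0 < a ^ 2 + b ^ 2 - 2 * a * b * cos θ := by
  have : 0 < (a - b) ^ 2 := by have := sub_ne_zero.2 hne; positivity
  nlinarith [cos_le_one θ]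

lemma logPotentialRadialDeriv_eq_zero {a b : ℝ} (ha : a ≠ 0) (hab : |a| < b) :
    logPotentialRadialDeriv a b = 0 := by
  have hpos : ∀ θ, 0 < b - a * cos θ := fun θ => by
    have : |a * cos θ| ≤ |a| := by
      rw [abs_mul]; exact mul_le_of_le_one_right (abs_nonneg a) (abs_cos_le_one θ)
    linarith [le_abs_self (a * cos θ)]
  have hderiv : ∀ θ, HasDerivAt (fun x => -(1 / a) * arctan (a * sin x / (b - a * cos x)))
      ((a - b * cos θ) / (a ^ 2 + b ^ 2 - 2 * a * b * cos θ)) θ := fun θ => by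
    refine ((hasDerivAt_arctan_sin_div (hpos θ).ne').const_mul _).congr_deriv ?_
    field_simp
    ring
  have hcont : Continuous fun θ => (a - b * cos θ) / (a ^ 2 + b ^ 2 - 2 * a * b * cos θ) := by
    have hD : ∀ θ, a ^ 2 + b ^ 2 - 2 * a * b * cos θ ≠ 0 := fun θ => by
      rw [sq_add_sq_sub_two_mul_mul_cos_eq]
      have := hpos θ
      positivity
    fun_prop (disch := exact hD)
  rw [logPotentialRadialDeriv, intervalIntegral.integral_eq_sub_of_hasDerivAt
    (fun θ _ => hderiv θ) (hcont.intervalIntegrable _ _)]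
  simp

lemma mul_logPotentialRadialDeriv_add_mul_swap {r s : ℝ} (hrs : 0 ≤ r * s) (hne : r ≠ s) :
    r * logPotentialRadialDeriv r s + s * logPotentialRadialDeriv s r = 2 * π := by
  have hD := sq_add_sq_sub_two_mul_mul_cos_pos hrs hne
  have hcont : ∀ a b, Continuous fun θ => (a - b * cos θ) / (r ^ 2 + s ^ 2 - 2 * r * s * cos θ) :=
    fun a b => by fun_prop (disch := exact fun θ => (hD θ).ne')
  simp_rw [logPotentialRadialDeriv, show ∀ θ, s ^ 2 + r ^ 2 - 2 * s * r * cos θ =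
    r ^ 2 + s ^ 2 - 2 * r * s * cos θ from fun θ => by ring, ← intervalIntegral.integral_const_mul]
  rw [← intervalIntegral.integral_add (((hcont r s).const_mul r).intervalIntegrable _ _)
    (((hcont s r).const_mul s).intervalIntegrable _ _)]
  calc _ = ∫ _ in (-π)..π, (1 : ℝ) := by
        congr 1
        ext θ
        rw [← mul_div_assoc, ← mul_div_assoc, ← add_div, div_eq_one_iff_eq (hD θ).ne']
        ring
    _ = 2 * π := by simp; ring

lemma logPotentialRadialDeriv_eq_two_pi_div {r s : ℝ} (hs : 0 < s) (hsr : s < r) :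
    logPotentialRadialDeriv r s = 2 * π / r := by
  have hr : 0 < r := hs.trans hsr
  have hsym := mul_logPotentialRadialDeriv_add_mul_swap (mul_pos hr hs).le hsr.ne'
  rw [logPotentialRadialDeriv_eq_zero hs.ne' (by rwa [abs_of_pos hs]), mul_zero, add_zero] at hsym
  rw [← hsym]
  field_simp

/-- For `I(r,s) = ∫_{-π}^{π} (r - s cosθ)/(r² + s² - 2rs cosθ) dθ` with `r, s > 0`:
(a) if `r < s` then `I(r,s) = 0`; (b) if `r > s` then `I(r,s) > 0`. -/
theorem stmt_7 (r s : ℝ) (hr : 0 < r) (hs : 0 < s) :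
    (r < s → (∫ θ in (-Real.pi)..Real.pi,
        (r - s * Real.cos θ) / (r ^ 2 + s ^ 2 - 2 * r * s * Real.cos θ)) = 0)
    ∧ (s < r → 0 < ∫ θ in (-Real.pi)..Real.pi,
        (r - s * Real.cos θ) / (r ^ 2 + s ^ 2 - 2 * r * s * Real.cos θ)) := by
  refine ⟨fun hrs => logPotentialRadialDeriv_eq_zero hr.ne' (by rwa [abs_of_pos hr]),
    fun hsr => ?_⟩
  change 0 < logPotentialRadialDeriv r s
  rw [logPotentialRadialDeriv_eq_two_pi_div hs hsr]
  positivity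
end

section
/- Fix 0 < κ < 1. Then there exists a constant c_κ > 0, depending only on κ, such that for all real numbers 0 < r₁* ≤ r₁ < R₁: ∫_{−κ r₁*}^{κ r₁*} ( √(R₁² − x²) − √(r₁² − x²) ) dx ≥ c_κ ∫_{−r₁*}^{r₁*} ( √(R₁² − x²) − √(r₁² − x²) ) dx. -/
/-!
Write `f x = √(R² - x²) - √(r² - x²) = (R² - r²) / (√(R² - x²) + √(r² - x²))`.
For `|x| ≤ r` the denominator is at most `R + r`, so `f ≥ R - r` and the integral over
`[-κ r*, κ r*]` is at least `2 κ r* (R - r)`. In the other direction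
`f x ≤ (R² - r²) / √(R (R - |x|))`, which has an explicit primitive; integrating it gives
`∫_{-r*}^{r*} f ≤ 8 r* (R - r)`.
Hence `c_κ = κ / 4` works.
-/

open intervalIntegral MeasureTheory

theorem Real.sqrt_sub_sqrt_le_div {a b : ℝ} (hb : 0 ≤ b) (hba : b ≤ a) :
    √a - √b ≤ (a - b) / √a := by
  rcases (hb.trans hba).eq_or_lt with rfl | ha
  · obtain rfl : b = 0 := le_antisymm hba hb
    simp
  rw [le_div_iff₀ (Real.sqrt_pos.mpr ha), sub_mul, Real.mul_self_sqrt ha.le]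
  nlinarith [Real.mul_self_sqrt hb, Real.sqrt_le_sqrt hba, Real.sqrt_nonneg b]

section inv_sqrt_const_sub

variable {a b R : ℝ}

theorem sqrt_const_sub_pos_of_mem_uIcc (ha : a < R) (hb : b < R) {x : ℝ}
    (hx : x ∈ Set.uIcc a b) : 0 < √(R - x) :=
  Real.sqrt_pos.mpr (sub_pos.mpr (hx.2.trans_lt (max_lt ha hb)))

theorem intervalIntegrable_inv_sqrt_const_sub (ha : a < R) (hb : b < R) :
    IntervalIntegrable (fun x => (√(R - x))⁻¹) volume a b :=
  ContinuousOn.intervalIntegrable <|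
    (by fun_prop : Continuous fun x => √(R - x)).continuousOn.inv₀ fun _ hx =>
      (sqrt_const_sub_pos_of_mem_uIcc ha hb hx).ne'

theorem integral_inv_sqrt_const_sub (ha : a < R) (hb : b < R) :
    ∫ x in a..b, (√(R - x))⁻¹ = 2 * (√(R - a) - √(R - b)) := by
  have hderiv : ∀ x ∈ Set.uIcc a b,
      HasDerivAt (fun y => -2 * √(R - y)) (√(R - x))⁻¹ x := by
    intro x hx
    have hsqrt := sqrt_const_sub_pos_of_mem_uIcc ha hb hx
    have hsub : R - x ≠ 0 := (Real.sqrt_pos.mp hsqrt).ne'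
    refine ((((hasDerivAt_id' x).const_sub R).sqrt hsub).const_mul (-2)).congr_deriv ?_
    field_simp [hsqrt.ne']
  rw [integral_eq_sub_of_hasDerivAt hderiv (intervalIntegrable_inv_sqrt_const_sub ha hb)]
  ring

end inv_sqrt_const_sub

theorem Function.Even.integral_neg_eq_two_mul {f : ℝ → ℝ} (hf : Function.Even f)
    (hcont : Continuous f) (s : ℝ) :
    ∫ x in -s..s, f x = 2 * ∫ x in 0..s, f x := by
  have hneg : ∫ x in -s..0, f x = ∫ x in 0..s, f x := by
    simpa [hf _] using (integral_comp_neg (a := 0) (b := s) (f := f)).symm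
  rw [← integral_add_adjacent_intervals (hcont.intervalIntegrable _ _)
    (hcont.intervalIntegrable _ _), hneg]
  ring

noncomputable def annulusSection (r R x : ℝ) : ℝ := √(R ^ 2 - x ^ 2) - √(r ^ 2 - x ^ 2)

section annulusSection

variable {r R x : ℝ}

theorem continuous_annulusSection : Continuous (annulusSection r R) := by
  unfold annulusSection; fun_prop

theorem even_annulusSection : Function.Even (annulusSection r R) := fun x => by
  simp [annulusSection]

theorem sub_le_annulusSection (hr : 0 ≤ r) (hrR : r ≤ R) (hx : x ^ 2 ≤ r ^ 2) :
    R - r ≤ annulusSection r R x := by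
  have hR2 : 0 ≤ R ^ 2 - x ^ 2 := by nlinarith
  have ha := Real.sq_sqrt hR2
  have hb := Real.sq_sqrt (sub_nonneg.mpr hx)
  have haR : √(R ^ 2 - x ^ 2) ≤ R := (Real.sqrt_le_left (hr.trans hrR)).mpr (by nlinarith)
  have hbr : √(r ^ 2 - x ^ 2) ≤ r := (Real.sqrt_le_left hr).mpr (by nlinarith)
  have hba : √(r ^ 2 - x ^ 2) ≤ √(R ^ 2 - x ^ 2) := Real.sqrt_le_sqrt (by nlinarith)
  unfold annulusSection
  nlinarith [Real.sqrt_nonneg (r ^ 2 - x ^ 2)]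

theorem annulusSection_le (hx : 0 ≤ x) (hxr : x ≤ r) (hrR : r < R) :
    annulusSection r R x ≤ (R ^ 2 - r ^ 2) / (√R * √(R - x)) := by
  have hxR : 0 < R - x := by linarith
  calc annulusSection r R x ≤ (R ^ 2 - r ^ 2) / √(R ^ 2 - x ^ 2) := by
        have := Real.sqrt_sub_sqrt_le_div (sub_nonneg.mpr (pow_le_pow_left₀ hx hxr 2))
          (sub_le_sub_right (pow_le_pow_left₀ (hx.trans hxr) hrR.le 2) (x ^ 2))
        rwa [sub_sub_sub_cancel_right] at this
    _ ≤ (R ^ 2 - r ^ 2) / (√R * √(R - x)) := by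
        gcongr
        · nlinarith
        · exact mul_pos (Real.sqrt_pos.mpr (by linarith)) (Real.sqrt_pos.mpr hxR)
        · rw [← Real.sqrt_mul (by linarith)]
          exact Real.sqrt_le_sqrt (by nlinarith)

theorem mul_sub_le_integral_annulusSection {a : ℝ} (ha : 0 ≤ a) (har : a ≤ r)
    (hrR : r ≤ R) :
    a * (R - r) ≤ ∫ x in 0..a, annulusSection r R x := by
  have := integral_mono_on (μ := volume) ha intervalIntegrable_const
    (continuous_annulusSection.intervalIntegrable _ _) fun x hx =>
      sub_le_annulusSection (ha.trans har) hrR (pow_le_pow_left₀ hx.1 (hx.2.trans har) 2)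
  rwa [intervalIntegral.integral_const, sub_zero, smul_eq_mul] at this

theorem integral_annulusSection_le {s : ℝ} (hs : 0 ≤ s) (hsr : s ≤ r) (hrR : r < R) :
    ∫ x in 0..s, annulusSection r R x ≤ 4 * s * (R - r) := by
  have hR : 0 < R := by linarith
  have hsR : s < R := by linarith
  calc ∫ x in 0..s, annulusSection r R x
      ≤ ∫ x in 0..s, (R ^ 2 - r ^ 2) / √R * (√(R - x))⁻¹ := by
        refine integral_mono_on hs (continuous_annulusSection.intervalIntegrable _ _) ?_
          fun x hx => ?_
        · exact (intervalIntegrable_inv_sqrt_const_sub (by linarith) hsR).const_mul _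
        · rw [← div_eq_mul_inv, div_div]
          exact annulusSection_le hx.1 (hx.2.trans hsr) hrR
    _ = (R ^ 2 - r ^ 2) / √R * (2 * (√R - √(R - s))) := by
        rw [intervalIntegral.integral_const_mul,
          integral_inv_sqrt_const_sub (by linarith) hsR, sub_zero]
    _ ≤ (R ^ 2 - r ^ 2) / √R * (2 * (s / √R)) := by
        have : 0 ≤ R ^ 2 - r ^ 2 := by nlinarith
        gcongr
        simpa using Real.sqrt_sub_sqrt_le_div (sub_nonneg.mpr hsR.le) (sub_le_self R hs)
    _ = 2 * s * (R + r) / R * (R - r) := by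
        field_simp
        rw [Real.sq_sqrt hR.le]
        ring
    _ ≤ 4 * s * (R - r) := by
        refine mul_le_mul_of_nonneg_right ?_ (by linarith)
        rw [div_le_iff₀ hR]
        nlinarith

end annulusSection

/-- For fixed `0 < κ < 1` there is `c_κ > 0` (independent of `r₁/R₁`) such that for all
`0 < r₁* ≤ r₁ < R₁`, the mass of the annulus slice over `|x| ≤ κ r₁*` controls the mass
over `|x| ≤ r₁*`. -/
theorem stmt_12 (κ : ℝ) (hκ0 : 0 < κ) (hκ1 : κ < 1) :
    ∃ c : ℝ, 0 < c ∧ ∀ rs r₁ R₁ : ℝ, 0 < rs → rs ≤ r₁ → r₁ < R₁ →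
      c * ∫ x in (-rs)..rs, (Real.sqrt (R₁ ^ 2 - x ^ 2) - Real.sqrt (r₁ ^ 2 - x ^ 2))
        ≤ ∫ x in (-(κ * rs))..(κ * rs),
            (Real.sqrt (R₁ ^ 2 - x ^ 2) - Real.sqrt (r₁ ^ 2 - x ^ 2)) := by
  refine ⟨κ / 4, by positivity, fun rs r₁ R₁ hrs hrs_le hr_lt => ?_⟩
  have hκrs : κ * rs ≤ r₁ := by nlinarith
  change κ / 4 * ∫ x in -rs..rs, annulusSection r₁ R₁ x ≤
    ∫ x in -(κ * rs)..κ * rs, annulusSection r₁ R₁ x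
  simp only [even_annulusSection.integral_neg_eq_two_mul continuous_annulusSection]
  calc κ / 4 * (2 * ∫ x in 0..rs, annulusSection r₁ R₁ x)
      ≤ κ / 4 * (2 * (4 * rs * (R₁ - r₁))) := by
        gcongr; exact integral_annulusSection_le hrs.le hrs_le hr_lt
    _ = 2 * (κ * rs * (R₁ - r₁)) := by ring
    _ ≤ 2 * ∫ x in 0..κ * rs, annulusSection r₁ R₁ x := by
        gcongr; exact mul_sub_le_integral_annulusSection (by positivity) hκrs hr_lt.le
end

section
/- Let m > 1. Then there exists a constant C_m > 0, depending only on m, with the following property: for every R > 0 and every nonincreasing nonnegative function ρ : [R, 4R] → [0, ∞), there exists r ∈ [R, 2R] such that ∫_{r}^{4R} ρ(x)^m dx ≤ a ∫_{r}^{4R} (x − r) ρ(x) dx, where a = (C_m / R) ρ(R)^{m−1}. -/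
/-!
Failure of the inequality at `u` says that most of the mass of `ρ` beyond `u` sits close to
`u`: for `d` small enough that `ρ u ^ (m - 1) ≤ a d / 2`, the mass beyond `u + d` is at most
`2 ρ(u)^m / a`, and monotonicity turns this into `a d ρ(u + 2d) ≤ 2 ρ(u)^m`. Along the points
`u_k = 2R - R/2^k` with steps `d_k = R/2^(k+2)`, this gives `ρ(u_k) ≤ ρ(R) q^k` with
`q^(m-1) = 1/4` once `C = 8/q`. So if the inequality failed on all of `[R, 2R]`, `ρ` would
vanish on `[2R, 4R]`, and then it holds trivially at `r = 2R`.
-/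

open MeasureTheory Set intervalIntegral

lemma Real.rpow_eq_rpow_sub_one_mul {x : ℝ} (hx : 0 ≤ x) {m : ℝ} (hm : m ≠ 0) :
    x ^ m = x ^ (m - 1) * x := by
  conv_lhs => rw [← sub_add_cancel m 1]
  rw [Real.rpow_add' hx (by simpa using hm), Real.rpow_one]

lemma le_zero_of_forall_le_mul_pow {x c q : ℝ} (hq0 : 0 ≤ q) (hq1 : q < 1)
    (h : ∀ k : ℕ, x ≤ c * q ^ k) : x ≤ 0 := by
  have hlim := (tendsto_pow_atTop_nhds_zero_of_lt_one hq0 hq1).const_mul c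
  rw [mul_zero] at hlim
  exact ge_of_tendsto' hlim h

lemma exists_rpow_sub_one_eq_quarter {m : ℝ} (hm : 1 < m) :
    ∃ q : ℝ, 0 < q ∧ q < 1 ∧ q ^ (m - 1) = 1 / 4 := by
  refine ⟨(1 / 4) ^ (1 / (m - 1)), by positivity,
    Real.rpow_lt_one (by norm_num) (by norm_num) (by simpa using hm), ?_⟩
  rw [← Real.rpow_mul (by norm_num), one_div_mul_cancel (by linarith), Real.rpow_one]

section AntitoneOn

variable {ρ : ℝ → ℝ} {A B : ℝ}

lemma AntitoneOn.intervalIntegrable_of_mem (hρ : AntitoneOn ρ (Icc A B)) {u v : ℝ}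
    (hu : u ∈ Icc A B) (hv : v ∈ Icc A B) : IntervalIntegrable ρ volume u v :=
  (hρ.mono (uIcc_subset_Icc hu hv)).intervalIntegrable

lemma AntitoneOn.integral_le_sub_mul (hρ : AntitoneOn ρ (Icc A B)) {u v : ℝ}
    (hu : A ≤ u) (huv : u ≤ v) (hv : v ≤ B) :
    ∫ x in u..v, ρ x ≤ (v - u) * ρ u := by
  have h := integral_mono_on huv
    (hρ.intervalIntegrable_of_mem ⟨hu, huv.trans hv⟩ ⟨hu.trans huv, hv⟩)
    intervalIntegrable_const fun x hx => hρ ⟨hu, huv.trans hv⟩ ⟨hu.trans hx.1, hx.2.trans hv⟩ hx.1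
  simpa [mul_comm] using h

lemma AntitoneOn.sub_mul_le_integral (hnn : ∀ x ∈ Icc A B, 0 ≤ ρ x)
    (hρ : AntitoneOn ρ (Icc A B)) {v w : ℝ} (hv : A ≤ v) (hvw : v ≤ w) (hw : w ≤ B) :
    (w - v) * ρ w ≤ ∫ x in v..B, ρ x := by
  have hvw' : (w - v) * ρ w ≤ ∫ x in v..w, ρ x := by
    have h := integral_mono_on hvw intervalIntegrable_const
      (hρ.intervalIntegrable_of_mem ⟨hv, hvw.trans hw⟩ ⟨hv.trans hvw, hw⟩)
      fun x hx => hρ ⟨hv.trans hx.1, hx.2.trans hw⟩ ⟨hv.trans hvw, hw⟩ hx.2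
    simpa [mul_comm] using h
  have hwB : 0 ≤ ∫ x in w..B, ρ x :=
    integral_nonneg hw fun x hx => hnn x ⟨hv.trans (hvw.trans hx.1), hx.2⟩
  rw [← integral_add_adjacent_intervals
    (hρ.intervalIntegrable_of_mem ⟨hv, hvw.trans hw⟩ ⟨hv.trans hvw, hw⟩)
    (hρ.intervalIntegrable_of_mem ⟨hv.trans hvw, hw⟩ ⟨hv.trans (hvw.trans hw), le_rfl⟩)]
  linarith

lemma AntitoneOn.integral_rpow_le_rpow_sub_one_mul_integral (hnn : ∀ x ∈ Icc A B, 0 ≤ ρ x)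
    (hρ : AntitoneOn ρ (Icc A B)) {m : ℝ} (hm : 1 ≤ m) {u : ℝ} (hu : A ≤ u) (huB : u ≤ B) :
    ∫ x in u..B, ρ x ^ m ≤ ρ u ^ (m - 1) * ∫ x in u..B, ρ x := by
  have hmono : AntitoneOn (fun x => ρ x ^ m) (Icc A B) := fun x hx y hy hxy =>
    Real.rpow_le_rpow (hnn y hy) (hρ hx hy hxy) (by linarith)
  rw [← intervalIntegral.integral_const_mul]
  refine integral_mono_on huB (hmono.intervalIntegrable_of_mem ⟨hu, huB⟩ ⟨hu.trans huB, le_rfl⟩)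
    ((hρ.intervalIntegrable_of_mem ⟨hu, huB⟩ ⟨hu.trans huB, le_rfl⟩).const_mul _) fun x hx => ?_
  have hx' : x ∈ Icc A B := ⟨hu.trans hx.1, hx.2⟩
  rw [Real.rpow_eq_rpow_sub_one_mul (hnn x hx') (by linarith)]
  exact mul_le_mul_of_nonneg_right
    (Real.rpow_le_rpow (hnn x hx') (hρ ⟨hu, huB⟩ hx' hx.1) (by linarith)) (hnn x hx')

lemma AntitoneOn.sub_mul_integral_le_integral_sub_mul (hnn : ∀ x ∈ Icc A B, 0 ≤ ρ x)
    (hρ : AntitoneOn ρ (Icc A B)) {u v : ℝ} (hu : A ≤ u) (huv : u ≤ v) (hv : v ≤ B) :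
    (v - u) * ∫ x in v..B, ρ x ≤ ∫ x in u..B, (x - u) * ρ x := by
  have hint : ∀ {s t}, s ∈ Icc A B → t ∈ Icc A B →
      IntervalIntegrable (fun x => (x - u) * ρ x) volume s t := fun hs ht =>
    (hρ.intervalIntegrable_of_mem hs ht).continuousOn_mul (by fun_prop)
  have hnear : 0 ≤ ∫ x in u..v, (x - u) * ρ x := integral_nonneg huv fun x hx =>
    mul_nonneg (by linarith [hx.1]) (hnn x ⟨hu.trans hx.1, hx.2.trans hv⟩)
  have hfar : (v - u) * ∫ x in v..B, ρ x ≤ ∫ x in v..B, (x - u) * ρ x := by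
    rw [← intervalIntegral.integral_const_mul]
    exact integral_mono_on hv
      ((hρ.intervalIntegrable_of_mem ⟨hu.trans huv, hv⟩
        ⟨hu.trans (huv.trans hv), le_rfl⟩).const_mul _)
      (hint ⟨hu.trans huv, hv⟩ ⟨hu.trans (huv.trans hv), le_rfl⟩) fun x hx =>
        mul_le_mul_of_nonneg_right (by linarith [hx.1]) (hnn x ⟨hu.trans (huv.trans hx.1), hx.2⟩)
  rw [← integral_add_adjacent_intervals (hint ⟨hu, huv.trans hv⟩ ⟨hu.trans huv, hv⟩)
    (hint ⟨hu.trans huv, hv⟩ ⟨hu.trans (huv.trans hv), le_rfl⟩)]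
  linarith

lemma AntitoneOn.mul_apply_le_two_mul_rpow_of_integral_lt (hnn : ∀ x ∈ Icc A B, 0 ≤ ρ x)
    (hρ : AntitoneOn ρ (Icc A B)) {m a u d : ℝ} (hm : 1 ≤ m) (ha : 0 < a) (hd : 0 < d)
    (hu : A ≤ u) (hB : u + 2 * d ≤ B) (hsmall : ρ u ^ (m - 1) ≤ a * d / 2)
    (hfail : a * ∫ x in u..B, (x - u) * ρ x < ∫ x in u..B, ρ x ^ m) :
    a * d * ρ (u + 2 * d) ≤ 2 * ρ u ^ m := by
  set X := ∫ x in (u + d)..B, ρ x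
  have hmem : ∀ {x}, u ≤ x → x ≤ u + 2 * d → x ∈ Icc A B := fun h₁ h₂ =>
    ⟨hu.trans h₁, h₂.trans hB⟩
  have hρu : 0 ≤ ρ u := hnn u (hmem le_rfl (by linarith))
  have htail : d * ρ (u + 2 * d) ≤ X := by
    simpa [two_mul, ← add_assoc] using
      hρ.sub_mul_le_integral hnn (v := u + d) (w := u + 2 * d) (by linarith) (by linarith) hB
  have hweight : d * X ≤ ∫ x in u..B, (x - u) * ρ x := by
    simpa using hρ.sub_mul_integral_le_integral_sub_mul hnn hu (v := u + d) (by linarith)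
      (by linarith)
  have hmass : ∫ x in u..B, ρ x ≤ d * ρ u + X := by
    have hnear : ∫ x in u..(u + d), ρ x ≤ d * ρ u := by
      simpa using hρ.integral_le_sub_mul hu (v := u + d) (by linarith) (by linarith)
    have hud : u + d ∈ Icc A B := hmem (by linarith) (by linarith)
    rw [← integral_add_adjacent_intervals
      (hρ.intervalIntegrable_of_mem (hmem le_rfl (by linarith)) hud)
      (hρ.intervalIntegrable_of_mem hud ⟨by linarith, le_rfl⟩)]
    linarith
  have hpower := hρ.integral_rpow_le_rpow_sub_one_mul_integral hnn hm hu (by linarith)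
  have hX : a * X < 2 * ρ u ^ m := by
    rw [Real.rpow_eq_rpow_sub_one_mul hρu (by linarith)]
    have hX0 : 0 ≤ X := integral_nonneg (by linarith) fun x hx => hnn x ⟨by linarith [hx.1], hx.2⟩
    -- `a d X ≤ a ∫ (x - u) ρ < ∫ ρ^m ≤ ρ(u)^(m-1) (d ρ(u) + X)` and `ρ(u)^(m-1) X ≤ a d X / 2`
    nlinarith [mul_le_mul_of_nonneg_left hmass (Real.rpow_nonneg hρu (m - 1)),
      mul_le_mul_of_nonneg_right hsmall hX0, mul_le_mul_of_nonneg_left hweight ha.le]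
  nlinarith [mul_le_mul_of_nonneg_left htail ha.le]

end AntitoneOn

lemma two_mul_sub_div_pow_mem_Ico {R : ℝ} (hR : 0 < R) (k : ℕ) :
    2 * R - R / 2 ^ k ∈ Ico R (2 * R) := by
  have : R / 2 ^ k ≤ R := div_le_self hR.le (one_le_pow₀ (by norm_num))
  have : 0 < R / 2 ^ k := by positivity
  constructor <;> linarith

lemma AntitoneOn.apply_two_mul_sub_div_pow_le {ρ : ℝ → ℝ} {m q R B : ℝ} (hm : 1 ≤ m)
    (hq0 : 0 < q) (hq1 : q ≤ 1) (hqm : q ^ (m - 1) = 1 / 4) (hR : 0 < R) (hRB : 2 * R ≤ B)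
    (hP : 0 < ρ R) (hnn : ∀ x ∈ Icc R B, 0 ≤ ρ x) (hρ : AntitoneOn ρ (Icc R B))
    (hfail : ∀ r ∈ Ico R (2 * R),
      8 / q / R * ρ R ^ (m - 1) * ∫ x in r..B, (x - r) * ρ x < ∫ x in r..B, ρ x ^ m)
    (k : ℕ) : ρ (2 * R - R / 2 ^ k) ≤ ρ R * q ^ k := by
  induction k with
  | zero => simp [two_mul]
  | succ k ih =>
    set a := 8 / q / R * ρ R ^ (m - 1) with ha_def
    set u := 2 * R - R / 2 ^ k with hu_def
    set d := R / 2 ^ (k + 2) with hd_def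
    have hd : 0 < d := by positivity
    have hu : u ∈ Ico R (2 * R) := two_mul_sub_div_pow_mem_Ico hR k
    have hρu : 0 ≤ ρ u := hnn u ⟨hu.1, by linarith [hu.2]⟩
    have hPm : 0 < ρ R ^ (m - 1) := Real.rpow_pos_of_pos hP _
    have hqk : 0 < q ^ k := by positivity
    have hbound : ρ u ^ (m - 1) ≤ ρ R ^ (m - 1) * (1 / 4) ^ k := by
      calc ρ u ^ (m - 1) ≤ (ρ R * q ^ k) ^ (m - 1) := Real.rpow_le_rpow hρu ih (by linarith)
        _ = ρ R ^ (m - 1) * (1 / 4) ^ k := by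
          rw [Real.mul_rpow hP.le hqk.le, ← Real.rpow_pow_comm hq0.le, hqm]
    have hhalf : (2 : ℝ) ^ k * (1 / 4) ^ k ≤ 1 := by
      rw [← mul_pow]; exact pow_le_one₀ (by norm_num) (by norm_num)
    have had : a * d = 2 * (ρ R ^ (m - 1) / (q * 2 ^ k)) := by
      rw [ha_def, hd_def]; field_simp; ring
    have hsmall : ρ u ^ (m - 1) ≤ a * d / 2 := by
      rw [had, mul_div_cancel_left₀ _ two_ne_zero, le_div_iff₀ (by positivity)]
      calc ρ u ^ (m - 1) * (q * 2 ^ k) ≤ ρ R ^ (m - 1) * (1 / 4) ^ k * (q * 2 ^ k) := by gcongr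
        _ = ρ R ^ (m - 1) * (q * (2 ^ k * (1 / 4) ^ k)) := by ring
        _ ≤ ρ R ^ (m - 1) := mul_le_of_le_one_right hPm.le (mul_le_one₀ hq1 (by positivity) hhalf)
    have hnext : u + 2 * d = 2 * R - R / 2 ^ (k + 1) := by rw [hu_def, hd_def]; ring
    have hstep := hρ.mul_apply_le_two_mul_rpow_of_integral_lt hnn hm (by positivity) hd hu.1
      (by linarith [hnext, (two_mul_sub_div_pow_mem_Ico hR (k + 1)).2]) hsmall (hfail u hu)
    rw [hnext, Real.rpow_eq_rpow_sub_one_mul hρu (by linarith)] at hstep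
    refine le_of_mul_le_mul_left ?_ hPm
    calc ρ R ^ (m - 1) * ρ (2 * R - R / 2 ^ (k + 1))
        = q * 2 ^ k / 2 * (a * d * ρ (2 * R - R / 2 ^ (k + 1))) := by rw [had]; field_simp
      _ ≤ q * 2 ^ k / 2 * (2 * (ρ u ^ (m - 1) * ρ u)) := by gcongr
      _ ≤ q * 2 ^ k * (ρ R ^ (m - 1) * (1 / 4) ^ k * (ρ R * q ^ k)) := by
          rw [← mul_assoc, div_mul_cancel₀ _ two_ne_zero]; gcongr
      _ = ρ R ^ (m - 1) * (ρ R * q ^ (k + 1)) * (2 ^ k * (1 / 4) ^ k) := by ring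
      _ ≤ ρ R ^ (m - 1) * (ρ R * q ^ (k + 1)) := mul_le_of_le_one_right (by positivity) hhalf

lemma AntitoneOn.nonpos_of_forall_lt_integral_rpow {ρ : ℝ → ℝ} {m q R B : ℝ} (hm : 1 ≤ m)
    (hq0 : 0 < q) (hq1 : q < 1) (hqm : q ^ (m - 1) = 1 / 4) (hR : 0 < R) (hRB : 2 * R ≤ B)
    (hnn : ∀ x ∈ Icc R B, 0 ≤ ρ x) (hρ : AntitoneOn ρ (Icc R B))
    (hfail : ∀ r ∈ Ico R (2 * R),
      8 / q / R * ρ R ^ (m - 1) * ∫ x in r..B, (x - r) * ρ x < ∫ x in r..B, ρ x ^ m)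
    {x : ℝ} (hx : x ∈ Icc (2 * R) B) : ρ x ≤ 0 := by
  have hxR : x ∈ Icc R B := ⟨by linarith [hx.1], hx.2⟩
  rcases le_or_gt (ρ R) 0 with hP | hP
  · exact (hρ ⟨le_rfl, by linarith⟩ hxR hxR.1).trans hP
  refine le_zero_of_forall_le_mul_pow (c := ρ R) hq0.le hq1 fun k => ?_
  have hk := two_mul_sub_div_pow_mem_Ico hR k
  exact (hρ ⟨hk.1, by linarith [hk.2]⟩ hxR (by linarith [hk.2, hx.1])).trans
    (hρ.apply_two_mul_sub_div_pow_le hm hq0 hq1.le hqm hR hRB hP hnn hfail k)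

lemma integral_rpow_le_of_forall_eq_zero {ρ : ℝ → ℝ} {m a r B : ℝ} (hm : m ≠ 0) (hrB : r ≤ B)
    (h : ∀ x ∈ Icc r B, ρ x = 0) :
    ∫ x in r..B, ρ x ^ m ≤ a * ∫ x in r..B, (x - r) * ρ x := by
  have hρ0 : ∀ x ∈ uIcc r B, ρ x = 0 := by rwa [uIcc_of_le hrB]
  have hlhs : ∫ x in r..B, ρ x ^ m = 0 := by
    rw [integral_congr (g := fun _ => 0) fun x hx => by simp [hρ0 x hx, Real.zero_rpow hm]]
    simp
  have hrhs : ∫ x in r..B, (x - r) * ρ x = 0 := by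
    rw [integral_congr (g := fun _ => 0) fun x hx => by simp [hρ0 x hx]]
    simp
  rw [hlhs, hrhs, mul_zero]

/-- Lemma of local clustering: for `m > 1` there is `C_m > 0` such that for every `R > 0`
and every nonincreasing nonnegative `ρ` on `[R, 4R]`, some `r ∈ [R, 2R]` satisfies
`∫_r^{4R} ρ(x)^m dx ≤ (C_m/R) ρ(R)^{m-1} ∫_r^{4R} (x-r) ρ(x) dx`. -/
theorem stmt_14 (m : ℝ) (hm : 1 < m) :
    ∃ C : ℝ, 0 < C ∧
      ∀ R : ℝ, 0 < R → ∀ ρ : ℝ → ℝ,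
        (∀ x ∈ Set.Icc R (4 * R), 0 ≤ ρ x) →
        AntitoneOn ρ (Set.Icc R (4 * R)) →
        ∃ r ∈ Set.Icc R (2 * R),
          (∫ x in r..(4 * R), ρ x ^ m)
            ≤ (C / R * ρ R ^ (m - 1)) * ∫ x in r..(4 * R), (x - r) * ρ x := by
  obtain ⟨q, hq0, hq1, hqm⟩ := exists_rpow_sub_one_eq_quarter hm
  refine ⟨8 / q, by positivity, fun R hR ρ hnn hρ => ?_⟩
  by_contra! hfail
  have hvanish : ∀ x ∈ Icc (2 * R) (4 * R), ρ x = 0 := fun x hx =>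
    le_antisymm (hρ.nonpos_of_forall_lt_integral_rpow hm.le hq0 hq1 hqm hR (by linarith) hnn
      (fun r hr => hfail r (Ico_subset_Icc_self hr)) hx) (hnn x ⟨by linarith [hx.1], hx.2⟩)
  exact (hfail (2 * R) ⟨by linarith, le_rfl⟩).not_ge
    (integral_rpow_le_of_forall_eq_zero (by linarith) (by linarith) hvanish)
end

section
/- There exists a universal constant c > 0 such that for all real numbers 0 < r < R and all θ ∈ [−π, π], setting r̃ := 2R − r, the following two inequalities hold: (a) |r − R cos θ| ≤ r̃ − R cos θ; (b) √(r² − 2 r R cos θ + R²) ≥ c √(r̃² − 2 r̃ R cos θ + R²). -/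
/-!
Put `z = R e^{iθ}` on the circle of radius `R`; part (a) amounts to `r ≤ R` and `R cos θ ≤ R`.
For (b), the triangle inequality through `r` gives `|r̃ - z| ≤ (r̃ - r) + |r - z| = 2(R - r) + |r - z|`,
and `R - r = |z| - |r| ≤ |r - z|`, so `|r̃ - z| ≤ 3 |r - z|`: the constant `c = 1/3` works.
-/

open Complex

lemma abs_sub_le_two_mul_sub_sub {r R x : ℝ} (hr : r ≤ R) (hx : x ≤ R) :
    |r - x| ≤ (2 * R - r) - x :=
  abs_le.mpr ⟨by linarith, by linarith⟩

lemma norm_sub_le_three_mul_norm_sub {E : Type*} [SeminormedAddCommGroup E] {a b z : E}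
    (hab : ‖b - a‖ ≤ 2 * (‖z‖ - ‖a‖)) : ‖b - z‖ ≤ 3 * ‖a - z‖ := by
  have hgap : ‖z‖ - ‖a‖ ≤ ‖a - z‖ := by
    simpa only [norm_sub_rev a z] using norm_sub_norm_le z a
  calc ‖b - z‖ ≤ ‖b - a‖ + ‖a - z‖ := norm_sub_le_norm_sub_add_norm_sub b a z
    _ ≤ 3 * ‖a - z‖ := by linarith

lemma Complex.norm_ofReal_sub_ofReal_mul_exp (a R θ : ℝ) :
    ‖(a : ℂ) - R * exp (θ * I)‖ = √(a ^ 2 - 2 * a * R * Real.cos θ + R ^ 2) := by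
  rw [← Real.sqrt_sq (norm_nonneg _), Complex.sq_norm, Complex.normSq_apply, exp_mul_I,
    ← ofReal_cos, ← ofReal_sin]
  congr 1
  simp only [sub_re, sub_im, mul_re, mul_im, add_re, add_im, ofReal_re, ofReal_im, I_re, I_im]
  nlinarith [Real.sin_sq_add_cos_sq θ]

/-- Reflection comparison: there is a universal `c > 0` such that for `0 < r < R`,
`θ ∈ [-π, π]`, and `r̃ = 2R - r`: (a) `|r - R cosθ| ≤ r̃ - R cosθ`;
(b) `√(r² - 2rR cosθ + R²) ≥ c √(r̃² - 2r̃R cosθ + R²)`. -/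
theorem stmt_16 :
    ∃ c : ℝ, 0 < c ∧
      ∀ r R θ : ℝ, 0 < r → r < R → θ ∈ Set.Icc (-Real.pi) Real.pi →
        |r - R * Real.cos θ| ≤ (2 * R - r) - R * Real.cos θ
        ∧ c * Real.sqrt ((2 * R - r) ^ 2 - 2 * (2 * R - r) * R * Real.cos θ + R ^ 2)
            ≤ Real.sqrt (r ^ 2 - 2 * r * R * Real.cos θ + R ^ 2) := by
  refine ⟨1 / 3, by norm_num, fun r R θ hr hrR _ => ⟨?_, ?_⟩⟩
  · have hcos : R * Real.cos θ ≤ R := by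
      nlinarith [Real.cos_le_one θ]
    exact abs_sub_le_two_mul_sub_sub hrR.le hcos
  · set z : ℂ := R * exp (θ * I)
    have hz : ‖z‖ = R := by
      simp [z, norm_exp_ofReal_mul_I, abs_of_pos (hr.trans hrR)]
    have hreflect : ‖((2 * R - r : ℝ) : ℂ) - r‖ ≤ 2 * (‖z‖ - ‖(r : ℂ)‖) := by
      rw [← ofReal_sub, norm_real, Real.norm_eq_abs, hz, norm_real, Real.norm_eq_abs,
        abs_of_pos hr, abs_of_pos (by linarith)]
      linarith
    have key := norm_sub_le_three_mul_norm_sub hreflect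
    rw [norm_ofReal_sub_ofReal_mul_exp, norm_ofReal_sub_ofReal_mul_exp] at key
    linarith
end

section
/- Let W : (0, ∞) → ℝ be nondecreasing, and let C₀ > 0 be such that W(ρ) ≥ W(1) + C₀ ln ρ for all ρ ∈ (0, 1]. Let M > 0 and let ρ : ℝ² → [0, ∞) be measurable with ∫_{ℝ²} ρ(x) dx = 1 and ρ(x) ≤ M for almost every x. Then the interaction energy satisfies ∫_{ℝ²} ∫_{ℝ²} W(|x − y|) ρ(y) ρ(x) dy dx ≥ 2 min{W(1), 0} − (π/2) C₀ M. In particular, the interaction energy is bounded below by a constant depending only on W(1), C₀ and M. -/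
/-!
The kernel `log⁺ ‖z‖⁻¹` is locally integrable in the plane, with `∫ log⁺ ‖z‖⁻¹ dz = π / 2`.
The hypotheses on `W` give the pointwise bound `W r ≥ min (W 1) 0 - C₀ log⁺ r⁻¹`, so for every `x`
the inner integral is at least `min (W 1) 0 - C₀ ∫ log⁺ ‖x - y‖⁻¹ ρ y dy
≥ min (W 1) 0 - (π / 2) C₀ M`, because `ρ` has mass one and is bounded by `M`. Integrating against
`ρ x` once more gives the claim. Since these lower bounds are nonpositive, they also hold when an
integral is undefined and hence equal to `0`.
-/

open MeasureTheory Metric Set Real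

theorem le_integral_of_nonpos_of_ae_le {α : Type*} [MeasurableSpace α] {μ : Measure α}
    {f g : α → ℝ} {c : ℝ} (hc : c ≤ 0) (hg : Integrable g μ) (hcg : c ≤ ∫ x, g x ∂μ)
    (hgf : g ≤ᵐ[μ] f) : c ≤ ∫ x, f x ∂μ := by
  by_cases hf : Integrable f μ
  · exact hcg.trans (integral_mono_ae hg hf hgf)
  · rwa [integral_undef hf]

theorem min_sub_mul_posLog_inv_le {W : ℝ → ℝ} {C₀ : ℝ} (hmono : MonotoneOn W (Ioi 0))
    (hlog : ∀ r : ℝ, 0 < r → r ≤ 1 → W 1 + C₀ * log r ≤ W r) {r : ℝ} (hr : 0 < r) :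
    min (W 1) 0 - C₀ * log⁺ r⁻¹ ≤ W r := by
  rw [posLog_apply, log_inv]
  rcases le_or_gt r 1 with h1 | h1
  · rw [max_eq_right (neg_nonneg.2 (log_nonpos hr.le h1))]
    linarith [hlog r hr h1, min_le_left (W 1) 0]
  · rw [max_eq_left (neg_nonpos.2 (log_nonneg h1.le)), mul_zero, sub_zero]
    exact (min_le_left _ _).trans (hmono (mem_Ioi.2 one_pos) (mem_Ioi.2 hr) h1.le)

theorem integral_Ioi_pow_mul_posLog_inv {n : ℕ} (hn : n ≠ 0) :
    ∫ y in Ioi (0 : ℝ), y ^ (n - 1) • log⁺ y⁻¹ = 1 / n ^ 2 := by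
  have hIoc : ∀ y ∈ Ioc (0 : ℝ) 1, y ^ (n - 1) • log⁺ y⁻¹ = -(y ^ (n - 1) * log y) := by
    intro y hy
    rw [smul_eq_mul, posLog_apply, log_inv, max_eq_right (neg_nonneg.2 (log_nonpos hy.1.le hy.2))]
    ring
  set F : ℝ → ℝ := fun t => t ^ n / n ^ 2 - t ^ n * log t / n
  have hF : ContinuousOn F (Icc 0 1) := by
    obtain ⟨k, rfl⟩ := Nat.exists_eq_add_one_of_ne_zero hn
    simp only [F, pow_succ, mul_assoc]
    fun_prop
  have hderiv : ∀ y ∈ Ioo (0 : ℝ) 1, HasDerivAt F (-(y ^ (n - 1) * log y)) y := by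
    intro y hy
    refine (((hasDerivAt_pow n y).div_const _).sub
      (((hasDerivAt_pow n y).mul (hasDerivAt_log hy.1.ne')).div_const _)).congr_deriv ?_
    obtain ⟨k, rfl⟩ := Nat.exists_eq_add_one_of_ne_zero hn
    have : y ≠ 0 := hy.1.ne'
    rw [Nat.add_sub_cancel, pow_succ]
    push_cast
    field_simp
    ring
  have hint := intervalIntegral.integrableOn_deriv_of_nonneg hF hderiv fun y hy =>
    neg_nonneg.2 (mul_nonpos_of_nonneg_of_nonpos (pow_nonneg hy.1.le _) (log_nonpos hy.1.le hy.2.le))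
  rw [setIntegral_eq_of_subset_of_forall_sdiff_eq_zero measurableSet_Ioi Ioc_subset_Ioi_self ?_,
    setIntegral_congr_fun measurableSet_Ioc hIoc, ← intervalIntegral.integral_of_le zero_le_one,
    intervalIntegral.integral_eq_sub_of_hasDerivAt_of_le zero_le_one hF hderiv
      ((intervalIntegrable_iff_integrableOn_Ioc_of_le zero_le_one).2 hint)]
  · simp [F, hn]
  · rintro y ⟨hy0, hy1⟩
    have hy : 1 < y := not_le.1 fun h => hy1 ⟨hy0, h⟩
    rw [posLog_apply, log_inv, max_eq_left (neg_nonpos.2 (log_nonneg hy.le)), smul_zero]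

section Translation

variable {G : Type*} [MeasurableSpace G] [AddGroup G] [MeasurableAdd G] [MeasurableNeg G]
  {μ : Measure G} [μ.IsAddLeftInvariant] [μ.IsNegInvariant] {φ ρ : G → ℝ} {M : ℝ}

theorem MeasureTheory.Integrable.comp_sub_left_mul (hφ : Integrable φ μ)
    (hρ : AEStronglyMeasurable ρ μ) (hρM : ∀ᵐ y ∂μ, ‖ρ y‖ ≤ M) (x : G) :
    Integrable (fun y => φ (x - y) * ρ y) μ :=
  (hφ.comp_sub_left x).mul_bdd hρ hρM

theorem integral_comp_sub_left_mul_le (hφ : Integrable φ μ) (hφ0 : ∀ z, 0 ≤ φ z)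
    (hρ : AEStronglyMeasurable ρ μ) (hρM : ∀ᵐ y ∂μ, ‖ρ y‖ ≤ M) (x : G) :
    ∫ y, φ (x - y) * ρ y ∂μ ≤ M * ∫ z, φ z ∂μ :=
  calc ∫ y, φ (x - y) * ρ y ∂μ ≤ ∫ y, M * φ (x - y) ∂μ := by
        refine integral_mono_ae (hφ.comp_sub_left_mul hρ hρM x)
          ((hφ.comp_sub_left x).const_mul M) ?_
        filter_upwards [hρM] with y hy
        rw [mul_comm M]
        exact mul_le_mul_of_nonneg_left ((le_abs_self _).trans hy) (hφ0 _)
    _ = M * ∫ z, φ z ∂μ := by rw [integral_const_mul, integral_sub_left_eq_self φ μ x]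

end Translation

section HaarMeasure

variable {E : Type*} [NormedAddCommGroup E] [NormedSpace ℝ E] [MeasurableSpace E] [BorelSpace E]
  [FiniteDimensional ℝ E] [Nontrivial E] (μ : Measure E) [μ.IsAddHaarMeasure]

theorem integral_posLog_inv_norm :
    ∫ x, log⁺ ‖x‖⁻¹ ∂μ = μ.real (ball 0 1) / Module.finrank ℝ E := by
  rw [integral_fun_norm_addHaar μ fun r => log⁺ r⁻¹,
    integral_Ioi_pow_mul_posLog_inv Module.finrank_pos.ne', nsmul_eq_mul, smul_eq_mul]
  field_simp

theorem integrable_posLog_inv_norm : Integrable (fun x => log⁺ ‖x‖⁻¹) μ := by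
  refine Integrable.of_integral_ne_zero ?_
  rw [integral_posLog_inv_norm]
  have hball : 0 < μ.real (ball 0 1) :=
    ENNReal.toReal_pos (measure_ball_pos μ 0 one_pos).ne' measure_ball_lt_top.ne
  have : 0 < (Module.finrank ℝ E : ℝ) := Nat.cast_pos.2 Module.finrank_pos
  positivity

theorem min_sub_mul_integral_posLog_inv_norm_le_integral {W : ℝ → ℝ} {C₀ M : ℝ}
    (hmono : MonotoneOn W (Ioi 0)) (hlog : ∀ r : ℝ, 0 < r → r ≤ 1 → W 1 + C₀ * log r ≤ W r)
    (hC₀ : 0 ≤ C₀) (hM : 0 ≤ M) {ρ : E → ℝ} (hρ0 : ∀ y, 0 ≤ ρ y) (hmass : ∫ y, ρ y ∂μ = 1)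
    (hρM : ∀ᵐ y ∂μ, ρ y ≤ M) (x : E) :
    min (W 1) 0 - C₀ * M * ∫ z, log⁺ ‖z‖⁻¹ ∂μ ≤ ∫ y, W ‖x - y‖ * ρ y ∂μ := by
  have hρ : Integrable ρ μ := Integrable.of_integral_ne_zero (by simp [hmass])
  have hρM' : ∀ᵐ y ∂μ, ‖ρ y‖ ≤ M := by
    filter_upwards [hρM] with y hy
    rwa [Real.norm_of_nonneg (hρ0 y)]
  have hker := integrable_posLog_inv_norm μ
  have hkerρ := hker.comp_sub_left_mul hρ.1 hρM' x
  have hconv := integral_comp_sub_left_mul_le hker (fun _ => posLog_nonneg) hρ.1 hρM' x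
  refine le_integral_of_nonpos_of_ae_le
    (g := fun y => min (W 1) 0 * ρ y - C₀ * (log⁺ ‖x - y‖⁻¹ * ρ y)) ?_
    ((hρ.const_mul _).sub (hkerρ.const_mul C₀)) ?_ ?_
  · have : 0 ≤ C₀ * M * ∫ z, log⁺ ‖z‖⁻¹ ∂μ :=
      mul_nonneg (mul_nonneg hC₀ hM) (integral_nonneg fun _ => posLog_nonneg)
    linarith [min_le_right (W 1) 0]
  · rw [integral_sub (hρ.const_mul _) (hkerρ.const_mul C₀), integral_const_mul, integral_const_mul,
      hmass, mul_one, mul_assoc]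
    linarith [mul_le_mul_of_nonneg_left hconv hC₀]
  · filter_upwards [μ.ae_ne x] with y hy
    have := mul_le_mul_of_nonneg_right
      (min_sub_mul_posLog_inv_le hmono hlog (norm_sub_pos_iff.2 hy.symm)) (hρ0 y)
    linarith

end HaarMeasure

theorem integral_posLog_inv_norm_euclideanSpace_fin_two :
    ∫ x : EuclideanSpace ℝ (Fin 2), log⁺ ‖x‖⁻¹ = π / 2 := by
  rw [integral_posLog_inv_norm, finrank_euclideanSpace_fin, measureReal_def,
    EuclideanSpace.volume_ball_fin_two]
  simp [pi_pos.le]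

theorem stmt_18_general (W : ℝ → ℝ) (hmono : MonotoneOn W (Set.Ioi (0 : ℝ)))
    (C₀ : ℝ) (hC₀ : 0 < C₀)
    (hlog : ∀ ρ : ℝ, 0 < ρ → ρ ≤ 1 → W 1 + C₀ * Real.log ρ ≤ W ρ)
    (M : ℝ) (hM : 0 < M)
    (ρ : EuclideanSpace ℝ (Fin 2) → ℝ)
    (hnn : ∀ x, 0 ≤ ρ x) (hmass : ∫ x, ρ x = 1)
    (hbdd : ∀ᵐ x, ρ x ≤ M) :
    2 * min (W 1) 0 - Real.pi / 2 * C₀ * M ≤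
      ∫ x : EuclideanSpace ℝ (Fin 2),
        (∫ y : EuclideanSpace ℝ (Fin 2), W ‖x - y‖ * ρ y) * ρ x := by
  have hinner : ∀ x, min (W 1) 0 - C₀ * M * (π / 2) ≤ ∫ y, W ‖x - y‖ * ρ y := fun x => by
    have := min_sub_mul_integral_posLog_inv_norm_le_integral volume hmono hlog hC₀.le hM.le hnn
      hmass hbdd x
    rwa [integral_posLog_inv_norm_euclideanSpace_fin_two] at this
  have hρ : Integrable ρ := Integrable.of_integral_ne_zero (by simp [hmass])
  have hpos : 0 < C₀ * M * (π / 2) := by positivity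
  calc 2 * min (W 1) 0 - π / 2 * C₀ * M ≤ min (W 1) 0 - C₀ * M * (π / 2) := by
        linarith [min_le_right (W 1) 0]
    _ ≤ _ := by
      refine le_integral_of_nonpos_of_ae_le (by linarith [min_le_right (W 1) 0])
        (hρ.const_mul _) (by rw [integral_const_mul, hmass, mul_one]) ?_
      exact Filter.Eventually.of_forall fun x => mul_le_mul_of_nonneg_right (hinner x) (hnn x)

/-- Lower bound for the (twice the) interaction energy: if `W` is nondecreasing on `(0,∞)`
with `W(ρ) ≥ W(1) + C₀ ln ρ` on `(0,1]`, and `ρ` is a probability density on `ℝ²` bounded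
by `M`, then `∬ W(|x-y|) ρ(y) ρ(x) dy dx ≥ 2 min{W(1), 0} - (π/2) C₀ M`. -/
theorem stmt_18 (W : ℝ → ℝ) (hmono : MonotoneOn W (Set.Ioi (0 : ℝ)))
    (C₀ : ℝ) (hC₀ : 0 < C₀)
    (hlog : ∀ ρ : ℝ, 0 < ρ → ρ ≤ 1 → W 1 + C₀ * Real.log ρ ≤ W ρ)
    (M : ℝ) (hM : 0 < M)
    (ρ : EuclideanSpace ℝ (Fin 2) → ℝ) (hmeas : Measurable ρ)
    (hnn : ∀ x, 0 ≤ ρ x) (hmass : ∫ x, ρ x = 1)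
    (hbdd : ∀ᵐ x, ρ x ≤ M) :
    2 * min (W 1) 0 - Real.pi / 2 * C₀ * M ≤
      ∫ x : EuclideanSpace ℝ (Fin 2),
        (∫ y : EuclideanSpace ℝ (Fin 2), W ‖x - y‖ * ρ y) * ρ x :=
  stmt_18_general W hmono C₀ hC₀ hlog M hM ρ hnn hmass hbdd
end
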